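/- Let G₁ be an r₁-regular graph on n₁ vertices and m₁ edges, and G₂ an r₂-regular graph on n₂ vertices, and let α ∈ [0,1]. (1) If r₁ = 1, then the A_α-spectrum of the R-vertex join G₁⟨v⟩G₂ consists precisely of: α(3+n₂) − 1; the values 2α + λ_i(A_α(G₂)) for i = 2,…,n₂; and the three roots of F(x) = (x−2α−r₂)(x² − (3α+αn₂+1)x + 2α²n₂ + 6α − 2) − 2n₂(1−α)²(x−2α). (2) If r₁ ≥ 2, then the A_α-spectrum of G₁⟨v⟩G₂ consists precisely of: 2α repeated m₁−n₁ times; αn₁ + λ_i(A_α(G₂)) for i = 2,…,n₂; the two roots of G_i(x) = x² − (2α+αr₁+αn₂+λ_i(A_α(G₁)))x + 2α²n₂ + 3αr₁ − r₁ + (3α−1)λ_i(A_α(G₁)) for each i = 2,…,n₁; and the three roots of F(x) = (x−αn₁−r₂)(x² − (2α+αr₁+αn₂+r₁)x + (2α²n₂+6αr₁−2r₁)) − n₁n₂(1−α)²(x−2α). -/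

import Mathlib

open Matrix Polynomial
open scoped Classical

noncomputable section

/-- `A_α(G) = α·D(G) + (1-α)·A(G)`, where `D(G)` is the diagonal degree matrix and
`A(G)` the adjacency matrix. -/
def Aalpha {V : Type*} [Fintype V] (G : SimpleGraph V) (α : ℝ) : Matrix V V ℝ :=
  α • Matrix.diagonal (fun v => (G.degree v : ℝ)) + (1 - α) • G.adjMatrix ℝ

/-- The `R`-vertex join `G₁⟨v⟩G₂`: take the `R`-graph `R(G₁)` (for each edge of `G₁` a
new vertex joined to both of its endpoints) together with `G₂`, and join every original
vertex of `G₁` with every vertex of `G₂`. -/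
def rVertexJoin {V₁ V₂ : Type*} (G₁ : SimpleGraph V₁) (G₂ : SimpleGraph V₂) :
    SimpleGraph (V₁ ⊕ (↥G₁.edgeSet ⊕ V₂)) :=
  SimpleGraph.fromRel fun a b =>
    match a, b with
    | Sum.inl v, Sum.inl w => G₁.Adj v w
    | Sum.inl v, Sum.inr (Sum.inl e) => v ∈ (e : Sym2 V₁)
    | Sum.inl _, Sum.inr (Sum.inr _) => True
    | Sum.inr (Sum.inr u), Sum.inr (Sum.inr w) => G₂.Adj u w
    | _, _ => False


/-!
Order the vertices of `G₁⟨v⟩G₂` as `V(G₁) ⊔ (E(G₁) ⊔ V(G₂))`. In `x I - A_α` the edge block is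
`(x - 2α) I` and the `G₂` block is `(x - αn₁) I - A_α(G₂)`; both are linked only to `V(G₁)`,
through `-(1 - α)` times the vertex–edge incidence matrix `B` and the all-ones matrix `J`.
Because `B Bᵀ = r₁ I + A(G₁)` and the all-ones vector is an eigenvector of `A_α` of a regular
graph, the Schur complement of these two blocks is `(x - 2α)⁻¹ (a I + b A_α(G₁) + c J)` for
scalars `a, b, c`, and the matrix determinant lemma gives its determinant as `∏ᵢ G_i(x)` times
a rational factor which, multiplied by the factors of the eigenvalues `r₁` and `r₂`, is `F(x)`.
This identity holds for all but finitely many `x`, hence between polynomials.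

By Gershgorin's theorem the largest eigenvalue of `A_α` of an `r`-regular graph is `r`. For
`r₁ = 1` the graph `G₁` is `K₂`, so `m₁ - n₁` would be `-1`; the trace gives the second
eigenvalue `2α - 1`, whose quadratic `(x - 2α)(x - α(3 + n₂) + 1)` supplies the cancelling factor.
-/

namespace Matrix

variable {n : Type*} [Fintype n] [DecidableEq n]

theorem det_smul_one_add_smul_of_charpoly_eq_prod {K : Type*} [Field K] {A : Matrix n n K}
    {μ : n → K} (h : A.charpoly = ∏ i, (X - C (μ i))) (a b : K) :
    (a • 1 + b • A).det = ∏ i, (a + b * μ i) := by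
  rcases eq_or_ne b 0 with rfl | hb
  · simp
  have hA : a • (1 : Matrix n n K) + b • A = (-b) • (scalar n (-a / b) - A) := by
    rw [smul_sub, scalar_apply, ← smul_one_eq_diagonal, smul_smul]
    field_simp
    simp [sub_eq_add_neg, add_comm]
  rw [hA, det_smul, ← eval_charpoly, h, eval_prod, ← Finset.card_univ, ← Finset.prod_const,
    ← Finset.prod_mul_distrib]
  refine Finset.prod_congr rfl fun i _ => ?_
  simp only [eval_sub, eval_X, eval_C]
  field_simp
  ring

theorem trace_eq_sum_of_charpoly_eq_prod {R : Type*} [CommRing R] {A : Matrix n n R}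
    {μ : n → R} (h : A.charpoly = ∏ i, (X - C (μ i))) : A.trace = ∑ i, μ i := by
  cases isEmpty_or_nonempty n
  · simp [trace]
  rw [trace_eq_neg_charpoly_coeff, h, ← Finset.card_univ,
    prod_X_sub_C_coeff_card_pred _ _ Finset.univ_nonempty.card_pos, neg_neg]

theorem isRoot_charpoly_of_mulVec_eq_smul {K : Type*} [Field K] {A : Matrix n n K}
    {v : n → K} {t : K} (hv : v ≠ 0) (h : A *ᵥ v = t • v) : A.charpoly.IsRoot t := by
  rw [← charpoly_toLin', ← Module.End.hasEigenvalue_iff_isRoot_charpoly]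
  exact Module.End.hasEigenvalue_of_hasEigenvector
    ⟨Module.End.mem_eigenspace_iff.mpr (by simpa using h), hv⟩

theorem le_of_isRoot_charpoly_of_nonneg {A : Matrix n n ℝ} {r t : ℝ} (hA : ∀ i j, 0 ≤ A i j)
    (hrow : ∀ i, ∑ j, A i j ≤ r) (ht : A.charpoly.IsRoot t) : t ≤ r := by
  rw [← charpoly_toLin', ← Module.End.hasEigenvalue_iff_isRoot_charpoly] at ht
  obtain ⟨k, hk⟩ := eigenvalue_mem_ball ht
  rw [Metric.mem_closedBall, Real.dist_eq] at hk
  have hoff : ∑ j ∈ Finset.univ.erase k, ‖A k j‖ = ∑ j, A k j - A k k := by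
    rw [← Finset.sum_erase_add _ _ (Finset.mem_univ k), add_sub_cancel_right]
    exact Finset.sum_congr rfl fun j _ => Real.norm_of_nonneg (hA k j)
  linarith [le_abs_self (t - A k k), hrow k]

theorem eigenvalue_zero_eq_of_nonneg_of_mulVec_one {m : ℕ} {A : Matrix (Fin m) (Fin m) ℝ}
    {μ : Fin m → ℝ} {r : ℝ} (hm : 0 < m) (hA : ∀ i j, 0 ≤ A i j) (hrow : A *ᵥ 1 = r • 1)
    (hμ : Antitone μ) (h : A.charpoly = ∏ i, (X - C (μ i))) : μ ⟨0, hm⟩ = r := by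
  have : Nonempty (Fin m) := ⟨⟨0, hm⟩⟩
  have hroot : ∀ t, A.charpoly.IsRoot t ↔ ∃ i, μ i = t := fun t => by
    rw [IsRoot.def, h, eval_prod, Finset.prod_eq_zero_iff]
    simp [sub_eq_zero, eq_comm]
  have hsum : ∀ i, ∑ j, A i j ≤ r := fun i => by
    simpa [mulVec, dotProduct] using (congrFun hrow i).le
  obtain ⟨j, rfl⟩ := (hroot r).mp (isRoot_charpoly_of_mulVec_eq_smul one_ne_zero hrow)
  exact le_antisymm (le_of_isRoot_charpoly_of_nonneg hA hsum ((hroot _).mpr ⟨_, rfl⟩))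
    (hμ (by simp [Fin.le_def]))

/- The all-ones matrices `vecMulVec 1 1` carry type ascriptions throughout: without one, a product
involving such a factor elaborates with the `CStarMatrix` multiplication instance. -/

theorem det_add_smul_vecMulVec_one {K : Type*} [Field K] {A : Matrix n n K} {c : K}
    (hc : c ≠ 0) (hA : A *ᵥ 1 = c • 1) (s : K) :
    (A + s • (vecMulVec 1 1 : Matrix n n K)).det = A.det * (1 + s * Fintype.card n / c) := by
  have hfac : A + s • (vecMulVec 1 1 : Matrix n n K) =
      A * (1 + (vecMulVec ((s / c) • 1) 1 : Matrix n n K)) := by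
    rw [Matrix.mul_add, Matrix.mul_one, mul_vecMulVec, mulVec_smul, hA, smul_smul,
      div_mul_cancel₀ _ hc, smul_vecMulVec]
  rw [hfac, det_mul, vecMulVec_eq Unit, det_one_add_replicateCol_mul_replicateRow]
  congr 1
  simp [dotProduct]
  ring

theorem vecMulVec_one_mul_inv_mul_vecMulVec_one {K l k : Type*} [Field K] {A : Matrix n n K}
    {c : K} (hA : IsUnit A.det) (hc : c ≠ 0) (hAc : A *ᵥ 1 = c • 1) :
    (vecMulVec 1 1 : Matrix l n K) * A⁻¹ * (vecMulVec 1 1 : Matrix n k K) =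
      (Fintype.card n / c) • (vecMulVec 1 1 : Matrix l k K) := by
  have hinv : A⁻¹ *ᵥ 1 = c⁻¹ • 1 := calc
    A⁻¹ *ᵥ 1 = c⁻¹ • (A⁻¹ *ᵥ (c • 1)) := by
      rw [mulVec_smul, smul_smul, inv_mul_cancel₀ hc, one_smul]
    _ = c⁻¹ • 1 := by rw [← hAc, mulVec_mulVec, nonsing_inv_mul _ hA, one_mulVec]
  rw [Matrix.mul_assoc, mul_vecMulVec, hinv, vecMulVec_mul_vecMulVec, ← smul_vecMulVec]
  simp [dotProduct, div_eq_mul_inv]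

theorem det_fromBlocks_fromCols_fromRows {R m k : Type*} [CommRing R] [Fintype m] [Fintype k]
    [DecidableEq m] [DecidableEq k] (A : Matrix n n R) (B₁ : Matrix n m R) (B₂ : Matrix n k R)
    (C₁ : Matrix m n R) (C₂ : Matrix k n R) {D₁ : Matrix m m R} {D₂ : Matrix k k R}
    (h₁ : IsUnit D₁.det) (h₂ : IsUnit D₂.det) :
    (fromBlocks A (fromCols B₁ B₂) (fromRows C₁ C₂) (fromBlocks D₁ 0 0 D₂)).det =
      D₁.det * D₂.det * (A - B₁ * D₁⁻¹ * C₁ - B₂ * D₂⁻¹ * C₂).det := by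
  let := invertibleOfIsUnitDet _ (show IsUnit (fromBlocks D₁ 0 0 D₂).det by
    rw [det_fromBlocks_zero₁₂]; exact h₁.mul h₂)
  rw [det_fromBlocks₂₂, invOf_eq_nonsing_inv, det_fromBlocks_zero₁₂,
    inv_fromBlocks_zero₁₂_of_isUnit_iff _ _ _ (by simp [isUnit_iff_isUnit_det, h₁, h₂]),
    fromCols_mul_fromBlocks, fromCols_mul_fromRows]
  simp [sub_sub, Matrix.mul_assoc]

end Matrix

theorem Polynomial.eq_of_eval_eq_of_eval_ne_zero {K : Type*} [Field K] [Infinite K]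
    {p f g : K[X]} (hp : p ≠ 0) (h : ∀ x, p.eval x ≠ 0 → f.eval x = g.eval x) : f = g :=
  eq_of_infinite_eval_eq _ _ ((p.finite_setOfPred_isRoot hp).infinite_compl.mono
    fun x hx => h x hx)

theorem Fin.prod_univ_eq_mul_prod_filter_val_ne_zero {M : Type*} [CommMonoid M] {n : ℕ}
    (hn : 0 < n) (f : Fin n → M) :
    ∏ i, f i = f ⟨0, hn⟩ * ∏ i ∈ Finset.univ.filter (fun i : Fin n => i.val ≠ 0), f i := by
  rw [← Finset.mul_prod_erase _ _ (Finset.mem_univ ⟨0, hn⟩)]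
  congr 2
  ext i
  simp [Fin.ext_iff]

namespace SimpleGraph

variable {V : Type*}

def edgeIncMatrix [DecidableEq V] (R : Type*) [Zero R] [One R] (G : SimpleGraph V) :
    Matrix V G.edgeSet R :=
  (G.incMatrix R).submatrix id Subtype.val

theorem edgeIncMatrix_apply [DecidableEq V] (R : Type*) [Zero R] [One R] (G : SimpleGraph V)
    (v : V) (e : G.edgeSet) : G.edgeIncMatrix R v e = if v ∈ (e : Sym2 V) then 1 else 0 := by
  simp [edgeIncMatrix, incMatrix_apply', incidenceSet, e.2]

variable [Fintype V] {G : SimpleGraph V}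

theorem IsRegularOfDegree.card_mul_eq_two_mul_card_edgeSet {r : ℕ}
    (h : G.IsRegularOfDegree r) : Fintype.card V * r = 2 * Fintype.card G.edgeSet := by
  have hsum := G.sum_degrees_eq_twice_card_edges
  simp only [h.degree_eq, Finset.sum_const, Finset.card_univ, smul_eq_mul] at hsum
  rw [hsum, edgeFinset_card]

theorem Connected.card_eq_two_of_isRegularOfDegree_one (hG : G.Connected)
    (hreg : G.IsRegularOfDegree 1) : Fintype.card V = 2 := by
  have hedges := hG.card_vert_le_card_edgeSet_add_one
  have hsum := hreg.card_mul_eq_two_mul_card_edgeSet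
  have hpos : 0 < Fintype.card V := Fintype.card_pos_iff.mpr hG.nonempty
  rw [Nat.card_eq_fintype_card, Nat.card_eq_fintype_card] at hedges
  omega

variable (G)

theorem sum_adjMatrix_apply (R : Type*) [NonAssocSemiring R] (v : V) :
    ∑ w, G.adjMatrix R v w = G.degree v := by
  simpa [mulVec, dotProduct] using G.adjMatrix_mulVec_const_apply (α := R) (a := 1) (v := v)

theorem sum_edgeSet_eq_sum {R : Type*} [AddCommMonoid R] {f : Sym2 V → R}
    (hf : ∀ e ∉ G.edgeSet, f e = 0) : ∑ e : G.edgeSet, f e = ∑ e, f e := by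
  rw [Finset.sum_set_coe]
  exact Finset.sum_subset (Finset.subset_univ _) fun e _ he => hf e (by simpa using he)

variable [DecidableEq V] (R : Type*) [Semiring R]

theorem sum_edgeIncMatrix_apply (v : V) : ∑ e, G.edgeIncMatrix R v e = G.degree v := by
  rw [edgeIncMatrix, ← sum_incMatrix_apply (R := R)]
  exact G.sum_edgeSet_eq_sum (f := G.incMatrix R v) fun e he =>
    incMatrix_of_notMem_incidenceSet _ fun h => he h.1

theorem sum_edgeIncMatrix_apply_edge (e : G.edgeSet) : ∑ v, G.edgeIncMatrix R v e = 2 :=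
  sum_incMatrix_apply_of_mem_edgeSet _ e.2

theorem edgeIncMatrix_mul_transpose :
    G.edgeIncMatrix R * (G.edgeIncMatrix R)ᵀ =
      diagonal (fun v => (G.degree v : R)) + G.adjMatrix R := by
  have h : G.edgeIncMatrix R * (G.edgeIncMatrix R)ᵀ = G.incMatrix R * (G.incMatrix R)ᵀ := by
    ext v w
    exact G.sum_edgeSet_eq_sum (f := fun e => G.incMatrix R v e * G.incMatrix R w e)
      fun e he => by rw [incMatrix_of_notMem_incidenceSet _ fun h => he h.1, zero_mul]
  rw [h, incMatrix_mul_transpose]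
  ext v w
  by_cases hvw : v = w
  · subst hvw; simp
  · simp [hvw, adjMatrix_apply]

end SimpleGraph

section Aalpha

variable {V : Type*} [Fintype V] (G : SimpleGraph V) (α : ℝ)

theorem Aalpha_apply (i j : V) :
    Aalpha G α i j = if i = j then α * G.degree i else if G.Adj i j then 1 - α else 0 := by
  by_cases h : i = j
  · subst h; simp [Aalpha]
  · simp [Aalpha, h, SimpleGraph.adjMatrix_apply]

theorem Aalpha_apply_nonneg (hα : α ∈ Set.Icc (0 : ℝ) 1) (i j : V) :
    0 ≤ Aalpha G α i j := by
  rw [Aalpha_apply]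
  split_ifs <;> nlinarith [hα.1, hα.2]

theorem Aalpha_mulVec_one : Aalpha G α *ᵥ 1 = fun i => (G.degree i : ℝ) := by
  ext i
  simp [Aalpha, add_mulVec, smul_mulVec, mulVec_diagonal]
  ring

theorem trace_Aalpha : (Aalpha G α).trace = α * ∑ v, (G.degree v : ℝ) := by
  simp [Aalpha, trace_diagonal, Finset.mul_sum]

variable {G} {r : ℕ}

theorem Aalpha_eq_of_isRegularOfDegree [DecidableEq V] (hG : G.IsRegularOfDegree r) :
    Aalpha G α = scalar V (α * r) + (1 - α) • G.adjMatrix ℝ := by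
  ext i j
  simp [Aalpha, hG.degree_eq, diagonal_apply]

theorem Aalpha_mulVec_one_of_isRegularOfDegree (hG : G.IsRegularOfDegree r) :
    Aalpha G α *ᵥ 1 = (r : ℝ) • 1 := by
  ext i; simp [Aalpha_mulVec_one, hG.degree_eq]

end Aalpha

theorem Aalpha_eigenvalue_zero_eq_of_isRegularOfDegree {n r : ℕ} {G : SimpleGraph (Fin n)}
    (hG : G.IsRegularOfDegree r) {α : ℝ} (hα : α ∈ Set.Icc (0 : ℝ) 1) (hn : 0 < n)
    {μ : Fin n → ℝ} (hμ : Antitone μ) (h : (Aalpha G α).charpoly = ∏ i, (X - C (μ i))) :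
    μ ⟨0, hn⟩ = r :=
  eigenvalue_zero_eq_of_nonneg_of_mulVec_one hn (Aalpha_apply_nonneg G α hα)
    (Aalpha_mulVec_one_of_isRegularOfDegree α hG) hμ h

theorem Aalpha_eigenvalue_one_eq_of_isRegularOfDegree_one {G : SimpleGraph (Fin 2)}
    (hG : G.IsRegularOfDegree 1) {α : ℝ} {μ : Fin 2 → ℝ}
    (h : (Aalpha G α).charpoly = ∏ i, (X - C (μ i))) (h0 : μ 0 = 1) : μ 1 = 2 * α - 1 := by
  have htr := (trace_eq_sum_of_charpoly_eq_prod h).symm.trans (trace_Aalpha G α)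
  simp only [Fin.sum_univ_two, hG.degree_eq, h0, Nat.cast_one] at htr
  linarith

namespace rVertexJoin

section Adjacency

variable {V₁ V₂ : Type*} (G₁ : SimpleGraph V₁) (G₂ : SimpleGraph V₂)

@[simp] theorem adj_inl_inl {v w : V₁} :
    (rVertexJoin G₁ G₂).Adj (.inl v) (.inl w) ↔ G₁.Adj v w := by
  simp only [rVertexJoin, SimpleGraph.fromRel_adj]
  exact ⟨fun h => h.2.elim id .symm, fun h => ⟨by simpa using h.ne, .inl h⟩⟩

@[simp] theorem adj_inl_edge {v : V₁} {e : G₁.edgeSet} :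
    (rVertexJoin G₁ G₂).Adj (.inl v) (.inr (.inl e)) ↔ v ∈ (e : Sym2 V₁) := by
  simp [rVertexJoin]

@[simp] theorem adj_edge_inl {v : V₁} {e : G₁.edgeSet} :
    (rVertexJoin G₁ G₂).Adj (.inr (.inl e)) (.inl v) ↔ v ∈ (e : Sym2 V₁) := by
  simp [rVertexJoin]

@[simp] theorem adj_inl_inr {v : V₁} {u : V₂} :
    (rVertexJoin G₁ G₂).Adj (.inl v) (.inr (.inr u)) := by
  simp [rVertexJoin]

@[simp] theorem adj_inr_inl {v : V₁} {u : V₂} :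
    (rVertexJoin G₁ G₂).Adj (.inr (.inr u)) (.inl v) := by
  simp [rVertexJoin]

@[simp] theorem not_adj_edge_edge {e f : G₁.edgeSet} :
    ¬ (rVertexJoin G₁ G₂).Adj (.inr (.inl e)) (.inr (.inl f)) := by
  simp [rVertexJoin]

@[simp] theorem not_adj_edge_inr {e : G₁.edgeSet} {u : V₂} :
    ¬ (rVertexJoin G₁ G₂).Adj (.inr (.inl e)) (.inr (.inr u)) := by
  simp [rVertexJoin]

@[simp] theorem not_adj_inr_edge {e : G₁.edgeSet} {u : V₂} :
    ¬ (rVertexJoin G₁ G₂).Adj (.inr (.inr u)) (.inr (.inl e)) := by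
  simp [rVertexJoin]

@[simp] theorem adj_inr_inr {u w : V₂} :
    (rVertexJoin G₁ G₂).Adj (.inr (.inr u)) (.inr (.inr w)) ↔ G₂.Adj u w := by
  simp only [rVertexJoin, SimpleGraph.fromRel_adj]
  exact ⟨fun h => h.2.elim id .symm, fun h => ⟨by simpa using h.ne, .inl h⟩⟩

variable [DecidableEq V₁]

theorem adjMatrix_eq (R : Type*) [Semiring R] :
    (rVertexJoin G₁ G₂).adjMatrix R =
      fromBlocks (G₁.adjMatrix R) (fromCols (G₁.edgeIncMatrix R) (vecMulVec 1 1))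
        (fromRows (G₁.edgeIncMatrix R)ᵀ (vecMulVec 1 1)) (fromBlocks 0 0 0 (G₂.adjMatrix R)) := by
  ext (v | e | u) (w | f | z) <;>
    simp [SimpleGraph.adjMatrix_apply, SimpleGraph.edgeIncMatrix_apply]

variable [Fintype V₁] [Fintype V₂]

theorem degree_inl (v : V₁) :
    (rVertexJoin G₁ G₂).degree (.inl v) = 2 * G₁.degree v + Fintype.card V₂ := by
  rw [← Nat.cast_id (SimpleGraph.degree _ _), ← SimpleGraph.sum_adjMatrix_apply _ ℕ, adjMatrix_eq]
  simp [Fintype.sum_sum_type, ← SimpleGraph.neighborFinset_eq_filter,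
    SimpleGraph.sum_edgeIncMatrix_apply]
  ring

theorem degree_edge (e : G₁.edgeSet) : (rVertexJoin G₁ G₂).degree (.inr (.inl e)) = 2 := by
  rw [← Nat.cast_id (SimpleGraph.degree _ _), ← SimpleGraph.sum_adjMatrix_apply _ ℕ, adjMatrix_eq]
  simp [Fintype.sum_sum_type, SimpleGraph.sum_edgeIncMatrix_apply_edge]

theorem degree_inr (u : V₂) :
    (rVertexJoin G₁ G₂).degree (.inr (.inr u)) = Fintype.card V₁ + G₂.degree u := by
  rw [← Nat.cast_id (SimpleGraph.degree _ _), ← SimpleGraph.sum_adjMatrix_apply _ ℕ, adjMatrix_eq]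
  simp [Fintype.sum_sum_type, ← SimpleGraph.neighborFinset_eq_filter]

end Adjacency

/-- The quadratic `G_i(x)` of the paper, with `μ` in place of `λ_i(A_α(G₁))`. -/
def quadratic (α r₁ n₂ μ : ℝ) : ℝ[X] :=
  X ^ 2 - C (2 * α + α * r₁ + α * n₂ + μ) * X
    + C (2 * α ^ 2 * n₂ + 3 * α * r₁ - r₁ + (3 * α - 1) * μ)

/-- The cubic `F(x)` of the paper. -/
def cubic (α n₁ n₂ r₁ r₂ : ℝ) : ℝ[X] :=
  (X - C (α * n₁ + r₂)) * (X ^ 2 - C (2 * α + α * r₁ + α * n₂ + r₁) * X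
    + C (2 * α ^ 2 * n₂ + 6 * α * r₁ - 2 * r₁)) - C (n₁ * n₂ * (1 - α) ^ 2) * (X - C (2 * α))

theorem quadratic_monic (α r₁ n₂ μ : ℝ) : (quadratic α r₁ n₂ μ).Monic := by
  unfold quadratic; monicity!

theorem quadratic_one_two_mul_sub_one (α n₂ : ℝ) :
    quadratic α 1 n₂ (2 * α - 1) = (X - C (2 * α)) * (X - C (α * (3 + n₂) - 1)) := by
  simp only [quadratic, map_sub, map_add, map_mul, map_pow, map_one, map_ofNat]
  ring

variable {V₁ V₂ : Type*} [Fintype V₁] [Fintype V₂] [DecidableEq V₁] [DecidableEq V₂]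
  {G₁ : SimpleGraph V₁} {G₂ : SimpleGraph V₂} {r₁ r₂ : ℕ}

theorem scalar_sub_Aalpha_eq_fromBlocks (hreg₁ : G₁.IsRegularOfDegree r₁)
    (hreg₂ : G₂.IsRegularOfDegree r₂) (α x : ℝ) :
    scalar _ x - Aalpha (rVertexJoin G₁ G₂) α =
      fromBlocks (scalar V₁ (x - α * (r₁ + Fintype.card V₂)) - Aalpha G₁ α)
        (fromCols (-(1 - α) • G₁.edgeIncMatrix ℝ) (-(1 - α) • vecMulVec 1 1))
        (fromRows (-(1 - α) • (G₁.edgeIncMatrix ℝ)ᵀ) (-(1 - α) • vecMulVec 1 1))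
        (fromBlocks (scalar _ (x - 2 * α)) 0 0
          (scalar V₂ (x - α * Fintype.card V₁) - Aalpha G₂ α)) := by
  ext (v | e | u) (w | f | z) <;>
    simp [Aalpha_apply, scalar_apply, diagonal_apply, degree_inl, degree_edge, degree_inr,
      hreg₁.degree_eq, hreg₂.degree_eq, SimpleGraph.edgeIncMatrix_apply] <;>
    split_ifs <;> ring

theorem smul_schur_eq (hreg₁ : G₁.IsRegularOfDegree r₁) (α : ℝ) {d : ℝ} (hd : d ≠ 0)
    (y s : ℝ) :
    d • (scalar V₁ y - Aalpha G₁ α - (-(1 - α) • G₁.edgeIncMatrix ℝ) *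
        (scalar G₁.edgeSet d)⁻¹ * (-(1 - α) • (G₁.edgeIncMatrix ℝ)ᵀ)
        - s • (vecMulVec 1 1 : Matrix V₁ V₁ ℝ)) =
      (d * y - (1 - α) ^ 2 * r₁ + (1 - α) * α * r₁) • 1 + (-(d + (1 - α))) • Aalpha G₁ α
        + (-(d * s)) • (vecMulVec 1 1 : Matrix V₁ V₁ ℝ) := by
  have hinv : (scalar G₁.edgeSet d)⁻¹ = d⁻¹ • 1 := inv_eq_left_inv <| by
    rw [scalar_apply, ← smul_one_eq_diagonal, smul_mul_smul, inv_mul_cancel₀ hd, one_smul,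
      Matrix.one_mul]
  rw [hinv]
  simp only [Matrix.smul_mul, Matrix.mul_smul, Matrix.mul_one,
    SimpleGraph.edgeIncMatrix_mul_transpose, hreg₁.degree_eq,
    Aalpha_eq_of_isRegularOfDegree α hreg₁, smul_smul, scalar_apply, ← smul_one_eq_diagonal]
  match_scalars <;> field_simp <;> ring

theorem det_schur_eq (hreg₁ : G₁.IsRegularOfDegree r₁) {α : ℝ} {μ₁ : V₁ → ℝ}
    (hμ₁ : (Aalpha G₁ α).charpoly = ∏ i, (X - C (μ₁ i))) {x : ℝ} (hd : x - 2 * α ≠ 0)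
    (n₂ s : ℝ) (hq : (quadratic α r₁ n₂ r₁).eval x ≠ 0) :
    (x - 2 * α) ^ Fintype.card V₁ * (scalar V₁ (x - α * (r₁ + n₂)) - Aalpha G₁ α
        - (-(1 - α) • G₁.edgeIncMatrix ℝ) * (scalar G₁.edgeSet (x - 2 * α))⁻¹
          * (-(1 - α) • (G₁.edgeIncMatrix ℝ)ᵀ) - s • (vecMulVec 1 1 : Matrix V₁ V₁ ℝ)).det =
      (∏ i, (quadratic α r₁ n₂ (μ₁ i)).eval x) *
        (1 - (x - 2 * α) * s * Fintype.card V₁ / (quadratic α r₁ n₂ r₁).eval x) := by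
  have hq_eval : ∀ μ, (x - 2 * α) * (x - α * (r₁ + n₂)) - (1 - α) ^ 2 * r₁ + (1 - α) * α * r₁
      + -(x - 2 * α + (1 - α)) * μ = (quadratic α r₁ n₂ μ).eval x := fun μ => by
    simp [quadratic]; ring
  have hQ : ∀ a b : ℝ, (a • 1 + b • Aalpha G₁ α) *ᵥ 1 = (a + b * r₁) • 1 := fun a b => by
    rw [add_mulVec, smul_mulVec, smul_mulVec, one_mulVec,
      Aalpha_mulVec_one_of_isRegularOfDegree α hreg₁, smul_smul, ← add_smul]
  rw [← det_smul, smul_schur_eq hreg₁ α hd,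
    det_add_smul_vecMulVec_one (by rwa [hq_eval]) (hQ _ _),
    det_smul_one_add_smul_of_charpoly_eq_prod hμ₁]
  simp only [hq_eval]
  ring

theorem det_scalar_sub_Aalpha_mul_eq (hreg₁ : G₁.IsRegularOfDegree r₁)
    (hreg₂ : G₂.IsRegularOfDegree r₂) {α : ℝ} {μ₁ : V₁ → ℝ}
    (hμ₁ : (Aalpha G₁ α).charpoly = ∏ i, (X - C (μ₁ i))) {x : ℝ} (hd : x - 2 * α ≠ 0)
    (hc : x - α * Fintype.card V₁ - r₂ ≠ 0)
    (hD₂ : (scalar V₂ (x - α * Fintype.card V₁) - Aalpha G₂ α).det ≠ 0)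
    (hq : (quadratic α r₁ (Fintype.card V₂) r₁).eval x ≠ 0) :
    (x - 2 * α) ^ Fintype.card V₁ * (x - α * Fintype.card V₁ - r₂) *
        (quadratic α r₁ (Fintype.card V₂) r₁).eval x *
        (scalar _ x - Aalpha (rVertexJoin G₁ G₂) α).det =
      (x - 2 * α) ^ Fintype.card G₁.edgeSet *
        (scalar V₂ (x - α * Fintype.card V₁) - Aalpha G₂ α).det *
        (∏ i, (quadratic α r₁ (Fintype.card V₂) (μ₁ i)).eval x) *
        (cubic α (Fintype.card V₁) (Fintype.card V₂) r₁ r₂).eval x := by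
  set n₁ : ℝ := (Fintype.card V₁ : ℝ)
  set n₂ : ℝ := (Fintype.card V₂ : ℝ)
  set D₂ := scalar V₂ (x - α * n₁) - Aalpha G₂ α
  set s := (1 - α) ^ 2 * n₂ / (x - α * n₁ - r₂)
  have hE : (scalar G₁.edgeSet (x - 2 * α)).det = (x - 2 * α) ^ Fintype.card G₁.edgeSet := by
    simp [scalar_apply]
  have hD₂one : D₂ *ᵥ 1 = (x - α * n₁ - r₂) • 1 := by
    rw [sub_mulVec, Aalpha_mulVec_one_of_isRegularOfDegree α hreg₂]
    ext; simp
  have hJ : (-(1 - α) • (vecMulVec 1 1 : Matrix V₁ V₂ ℝ)) * D₂⁻¹ *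
      (-(1 - α) • (vecMulVec 1 1 : Matrix V₂ V₁ ℝ)) = s • (vecMulVec 1 1 : Matrix V₁ V₁ ℝ) := by
    simp only [Matrix.smul_mul, Matrix.mul_smul,
      vecMulVec_one_mul_inv_mul_vecMulVec_one hD₂.isUnit hc hD₂one, smul_smul]
    congr 1
    ring
  have hF : (x - α * n₁ - r₂) * (quadratic α r₁ n₂ r₁).eval x *
      (1 - (x - 2 * α) * s * n₁ / (quadratic α r₁ n₂ r₁).eval x) =
        (cubic α n₁ n₂ r₁ r₂).eval x := by
    simp only [s]
    field_simp
    simp [cubic, quadratic]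
    ring
  rw [scalar_sub_Aalpha_eq_fromBlocks hreg₁ hreg₂,
    det_fromBlocks_fromCols_fromRows _ _ _ _ _ (by simp [hd]) hD₂.isUnit, hJ, hE]
  linear_combination (x - α * n₁ - r₂) * (quadratic α r₁ n₂ r₁).eval x *
      (x - 2 * α) ^ Fintype.card G₁.edgeSet * D₂.det * det_schur_eq hreg₁ hμ₁ hd n₂ s hq
    + (x - 2 * α) ^ Fintype.card G₁.edgeSet * D₂.det *
      (∏ i, (quadratic α r₁ n₂ (μ₁ i)).eval x) * hF

theorem mul_charpoly_eq (hreg₁ : G₁.IsRegularOfDegree r₁) (hreg₂ : G₂.IsRegularOfDegree r₂)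
    {α : ℝ} {μ₁ : V₁ → ℝ} (hμ₁ : (Aalpha G₁ α).charpoly = ∏ i, (X - C (μ₁ i))) :
    (X - C (2 * α)) ^ Fintype.card V₁ * (X - C (α * Fintype.card V₁ + r₂)) *
        quadratic α r₁ (Fintype.card V₂) r₁ * (Aalpha (rVertexJoin G₁ G₂) α).charpoly =
      (X - C (2 * α)) ^ Fintype.card G₁.edgeSet *
        (Aalpha G₂ α).charpoly.comp (X - C (α * Fintype.card V₁)) *
        (∏ i, quadratic α r₁ (Fintype.card V₂) (μ₁ i)) *
        cubic α (Fintype.card V₁) (Fintype.card V₂) r₁ r₂ := by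
  set p := (X - C (2 * α)) * (X - C (α * Fintype.card V₁ + r₂)) *
    (Aalpha G₂ α).charpoly.comp (X - C (α * Fintype.card V₁)) *
    quadratic α r₁ (Fintype.card V₂) r₁
  have hp : p.Monic := (((monic_X_sub_C _).mul (monic_X_sub_C _)).mul
    ((charpoly_monic _).comp_X_sub_C _)).mul (quadratic_monic _ _ _ _)
  refine eq_of_eval_eq_of_eval_ne_zero hp.ne_zero fun x hx => ?_
  simp only [p, eval_mul, eval_sub, eval_X, eval_C, eval_comp, eval_charpoly,
    mul_ne_zero_iff] at hx
  obtain ⟨⟨⟨hd, hc⟩, hD₂⟩, hq⟩ := hx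
  simp only [eval_mul, eval_pow, eval_sub, eval_X, eval_C, eval_comp, eval_charpoly, eval_prod]
  convert det_scalar_sub_Aalpha_mul_eq hreg₁ hreg₂ hμ₁ hd (by convert hc using 1; ring) hD₂ hq
    using 1
  ring

theorem pow_mul_charpoly_eq {n₁ n₂ r₁ r₂ : ℕ} {G₁ : SimpleGraph (Fin n₁)}
    {G₂ : SimpleGraph (Fin n₂)} (hreg₁ : G₁.IsRegularOfDegree r₁)
    (hreg₂ : G₂.IsRegularOfDegree r₂) {α : ℝ} (hn₁ : 0 < n₁) (hn₂ : 0 < n₂) {μ₁ : Fin n₁ → ℝ}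
    (hμ₁ : (Aalpha G₁ α).charpoly = ∏ i, (X - C (μ₁ i))) (hμ₁r : μ₁ ⟨0, hn₁⟩ = r₁)
    {μ₂ : Fin n₂ → ℝ} (hμ₂ : (Aalpha G₂ α).charpoly = ∏ i, (X - C (μ₂ i)))
    (hμ₂r : μ₂ ⟨0, hn₂⟩ = r₂) :
    (X - C (2 * α)) ^ n₁ * (Aalpha (rVertexJoin G₁ G₂) α).charpoly =
      (X - C (2 * α)) ^ Fintype.card G₁.edgeSet *
        (∏ i ∈ Finset.univ.filter (fun i : Fin n₂ => i.val ≠ 0), (X - C (α * n₁ + μ₂ i))) *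
        (∏ i ∈ Finset.univ.filter (fun i : Fin n₁ => i.val ≠ 0), quadratic α r₁ n₂ (μ₁ i)) *
        cubic α n₁ n₂ r₁ r₂ := by
  have key := mul_charpoly_eq (G₂ := G₂) hreg₁ hreg₂ hμ₁
  have hcomp : (Aalpha G₂ α).charpoly.comp (X - C (α * n₁)) =
      ∏ i, (X - C (α * n₁ + μ₂ i)) := by
    simp [hμ₂, prod_comp, sub_sub]
  simp only [Fintype.card_fin, hcomp] at key
  rw [Fin.prod_univ_eq_mul_prod_filter_val_ne_zero hn₁,
    Fin.prod_univ_eq_mul_prod_filter_val_ne_zero hn₂, hμ₁r, hμ₂r] at key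
  refine mul_left_cancel₀ (mul_ne_zero (X_sub_C_ne_zero (α * n₁ + r₂))
    (quadratic_monic α r₁ n₂ r₁).ne_zero) ?_
  linear_combination key

end rVertexJoin

/-- Corollary: the `A_α`-spectrum (as the factorization of the `A_α`-characteristic
polynomial) of the `R`-vertex join `G₁⟨v⟩G₂` of an `r₁`-regular graph `G₁` and an
`r₂`-regular graph `G₂`, in the cases `r₁ = 1` and `r₁ ≥ 2`. -/
theorem Aalpha_spectrum_rVertexJoin_regular
    {n₁ m₁ n₂ r₁ r₂ : ℕ} (G₁ : SimpleGraph (Fin n₁)) (G₂ : SimpleGraph (Fin n₂))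
    (hconn₁ : G₁.Connected) (hconn₂ : G₂.Connected)
    (hreg₁ : G₁.IsRegularOfDegree r₁) (hreg₂ : G₂.IsRegularOfDegree r₂)
    (hm : Fintype.card G₁.edgeSet = m₁)
    (α : ℝ) (hα : α ∈ Set.Icc (0 : ℝ) 1)
    (μ₁ : Fin n₁ → ℝ) (hμ₁ : Antitone μ₁)
    (hμ₁ch : (Aalpha G₁ α).charpoly = ∏ i, (X - C (μ₁ i)))
    (μ₂ : Fin n₂ → ℝ) (hμ₂ : Antitone μ₂)
    (hμ₂ch : (Aalpha G₂ α).charpoly = ∏ i, (X - C (μ₂ i))) :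
    (r₁ = 1 →
      (Aalpha (rVertexJoin G₁ G₂) α).charpoly =
        (X - C (α * (3 + n₂) - 1)) *
        (∏ i ∈ Finset.univ.filter (fun i : Fin n₂ => i.val ≠ 0),
          (X - C (2 * α + μ₂ i))) *
        ((X - C (2 * α + r₂)) *
            (X ^ 2 - C (3 * α + α * n₂ + 1) * X + C (2 * α ^ 2 * n₂ + 6 * α - 2))
          - C (2 * n₂ * (1 - α) ^ 2) * (X - C (2 * α)))) ∧
    (2 ≤ r₁ →
      (Aalpha (rVertexJoin G₁ G₂) α).charpoly =
        (X - C (2 * α)) ^ (m₁ - n₁) *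
        (∏ i ∈ Finset.univ.filter (fun i : Fin n₂ => i.val ≠ 0),
          (X - C (α * n₁ + μ₂ i))) *
        (∏ i ∈ Finset.univ.filter (fun i : Fin n₁ => i.val ≠ 0),
          (X ^ 2 - C (2 * α + α * r₁ + α * n₂ + μ₁ i) * X
            + C (2 * α ^ 2 * n₂ + 3 * α * r₁ - r₁ + (3 * α - 1) * μ₁ i))) *
        ((X - C (α * n₁ + r₂)) *
            (X ^ 2 - C (2 * α + α * r₁ + α * n₂ + r₁) * X
              + C (2 * α ^ 2 * n₂ + 6 * α * r₁ - 2 * r₁))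
          - C (n₁ * n₂ * (1 - α) ^ 2) * (X - C (2 * α)))) := by
  have hn₁ : 0 < n₁ := Fin.pos_iff_nonempty.mpr hconn₁.nonempty
  have hn₂ : 0 < n₂ := Fin.pos_iff_nonempty.mpr hconn₂.nonempty
  have hμ₁r := Aalpha_eigenvalue_zero_eq_of_isRegularOfDegree hreg₁ hα hn₁ hμ₁ hμ₁ch
  have key := rVertexJoin.pow_mul_charpoly_eq hreg₁ hreg₂ hn₁ hn₂ hμ₁ch hμ₁r hμ₂ch
    (Aalpha_eigenvalue_zero_eq_of_isRegularOfDegree hreg₂ hα hn₂ hμ₂ hμ₂ch)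
  have hedges := hreg₁.card_mul_eq_two_mul_card_edgeSet
  rw [hm, Fintype.card_fin] at hedges
  rw [hm] at key
  refine ⟨fun hr₁ => ?_, fun hr₁ => ?_⟩
  · subst hr₁
    obtain rfl : n₁ = 2 := by simpa using hconn₁.card_eq_two_of_isRegularOfDegree_one hreg₁
    obtain rfl : m₁ = 1 := by omega
    have hfilter : Finset.univ.filter (fun i : Fin 2 => i.val ≠ 0) = {1} := by decide
    simp only [Nat.cast_one, Nat.cast_ofNat, mul_comm α 2] at key
    rw [hfilter, Finset.prod_singleton, Aalpha_eigenvalue_one_eq_of_isRegularOfDegree_one hreg₁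
      hμ₁ch (by simpa using hμ₁r), rVertexJoin.quadratic_one_two_mul_sub_one] at key
    refine mul_left_cancel₀ (pow_ne_zero 2 (X_sub_C_ne_zero (2 * α))) ?_
    rw [key]
    simp only [rVertexJoin.cubic, map_sub, map_add, map_mul, map_pow, map_one, map_ofNat]
    ring
  · obtain ⟨k, rfl⟩ : ∃ k, m₁ = n₁ + k :=
      ⟨m₁ - n₁, by have := Nat.mul_le_mul_left n₁ hr₁; omega⟩
    rw [pow_add] at key
    rw [Nat.add_sub_cancel_left]
    refine mul_left_cancel₀ (pow_ne_zero n₁ (X_sub_C_ne_zero (2 * α))) ?_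
    rw [key]
    simp only [rVertexJoin.quadratic, rVertexJoin.cubic]
    ring
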